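/- Let T be a finite tree rooted at a vertex x, let v_1, v_2, …, v_k be the children of x, and for each 1 ≤ i ≤ k let l_i denote the rooted transitive number of v_i, with l_1 ≤ l_2 ≤ … ≤ l_k. Let z be the largest integer such that there exists a subsequence l_{i_1} ≤ l_{i_2} ≤ … ≤ l_{i_z} of (l_1, …, l_k) with l_{i_j} ≥ j for all 1 ≤ j ≤ z, and fix 1 ≤ j ≤ z. Suppose no child of x other than v_{i_1}, v_{i_2}, …, v_{i_z} has rooted transitive number at least j. Then there exists a transitive partition π = {V_1, V_2, …, V_{1+z}} of T with x ∈ V_{1+z} and v_{i_j} ∈ V_s for some 1 ≤ s ≤ j − 1 if and only if there exists an index r with 1 ≤ r ≤ j − 1 such that l_{i_t} ≥ t + 1 for all r ≤ t ≤ j − 1; moreover, if r is the minimum such index, then for every s with r ≤ s ≤ j − 1 there exists a transitive partition {V_1, …, V_{1+z}} of T with x ∈ V_{1+z} and v_{i_j} ∈ V_s. -/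
import Mathlib


variable {V : Type*}

/-- `A` dominates `B` in `G`: every vertex of `B` has a neighbour in `A`. -/
def Dominates (G : SimpleGraph V) (A B : Set V) : Prop :=
  ∀ b ∈ B, ∃ a ∈ A, G.Adj a b

/-- `P` is a partition of the set `W` into `k` (nonempty, pairwise disjoint) parts. -/
def IsPartitionOn (W : Set V) {k : ℕ} (P : Fin k → Set V) : Prop :=
  (∀ i, (P i).Nonempty) ∧ (Pairwise fun i j => Disjoint (P i) (P j)) ∧ (⋃ i, P i) = W

/-- `P` is an upper domatic partition of `G` (of size `k`). -/
def IsUpperDomaticPart (G : SimpleGraph V) {k : ℕ} (P : Fin k → Set V) : Prop :=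
  IsPartitionOn Set.univ P ∧
    ∀ i j : Fin k, i < j → Dominates G (P i) (P j) ∨ Dominates G (P j) (P i)

/-- `P` is a transitive partition of the set `W` (of size `k`), with respect to `G`. -/
def IsTransitivePartOn (G : SimpleGraph V) (W : Set V) {k : ℕ} (P : Fin k → Set V) : Prop :=
  IsPartitionOn W P ∧ ∀ i j : Fin k, i < j → Dominates G (P i) (P j)

/-- The upper domatic number `D(G)`. -/
noncomputable def upperDomaticNumber (G : SimpleGraph V) : ℕ :=
  sSup {k | ∃ P : Fin k → Set V, IsUpperDomaticPart G P}

/-- The transitivity `Tr(G)`. -/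
noncomputable def transitivityNumber (G : SimpleGraph V) : ℕ :=
  sSup {k | ∃ P : Fin k → Set V, IsTransitivePartOn G Set.univ P}

/-- The clique number `ω(G)`. -/
noncomputable def cliqueNumber (G : SimpleGraph V) : ℕ :=
  sSup {n | ∃ s : Finset V, G.IsNClique n s}

/-- The set of vertices reachable from `v` by a walk avoiding `x`.  When `G` is a
tree rooted at `x` and `v` is a child of `x`, this is the vertex set of the
subtree rooted at `v`. -/
def SubtreeAvoiding (G : SimpleGraph V) (x v : V) : Set V :=
  {u | ∃ w : G.Walk v u, x ∉ w.support}

/-- The transitive number of a vertex `v` with respect to the induced subgraph of `G`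
on the vertex set `W`: the largest `p` such that some transitive partition
`{V_1, …, V_k}` of `W` has `v ∈ V_p`. -/
noncomputable def transNumOn (G : SimpleGraph V) (W : Set V) (v : V) : ℕ :=
  sSup {p | ∃ (k : ℕ) (P : Fin k → Set V), IsTransitivePartOn G W P ∧
    ∃ i : Fin k, (i : ℕ) + 1 = p ∧ v ∈ P i}

section Helpers

variable {V : Type*}

open SimpleGraph Set

lemma subtree_self {G : SimpleGraph V} {x c : V} (h : G.Adj x c) :
    c ∈ SubtreeAvoiding G x c :=
  ⟨SimpleGraph.Walk.nil, by simp [(h.ne : x ≠ c)]⟩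

lemma subtree_not_mem_x {G : SimpleGraph V} {x c : V} : x ∉ SubtreeAvoiding G x c := by
  rintro ⟨w, hw⟩; exact hw w.end_mem_support

lemma subtree_adj {G : SimpleGraph V} {x c u a : V} (hu : u ∈ SubtreeAvoiding G x c)
    (hadj : G.Adj u a) (hax : a ≠ x) : a ∈ SubtreeAvoiding G x c := by
  obtain ⟨w, hw⟩ := hu
  refine ⟨w.append (SimpleGraph.Walk.cons hadj SimpleGraph.Walk.nil), ?_⟩
  rw [SimpleGraph.Walk.mem_support_append_iff]
  rintro (h | h)
  · exact hw h
  · simp only [SimpleGraph.Walk.support_cons, SimpleGraph.Walk.support_nil,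
      List.mem_cons, List.mem_singleton, List.not_mem_nil] at h
    rcases h with h | h | h
    · exact hw (by rw [h]; exact w.end_mem_support)
    · exact hax h.symm
    · exact h

lemma subtree_eq_child {G : SimpleGraph V} (hT : G.IsTree) {x c c' u : V}
    (hc : G.Adj x c) (hc' : G.Adj x c')
    (hu : u ∈ SubtreeAvoiding G x c) (hu' : u ∈ SubtreeAvoiding G x c') : c = c' := by
  classical
  obtain ⟨w, hw⟩ := hu
  obtain ⟨w', hw'⟩ := hu'
  have hb : x ∉ w.bypass.support := fun h => hw (w.support_bypass_subset h)
  have hb' : x ∉ w'.bypass.support := fun h => hw' (w'.support_bypass_subset h)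
  have p1 : (SimpleGraph.Walk.cons hc w.bypass).IsPath := (w.bypass_isPath).cons hb
  have p2 : (SimpleGraph.Walk.cons hc' w'.bypass).IsPath := (w'.bypass_isPath).cons hb'
  have heq := (hT.existsUnique_path x u).unique p1 p2
  have h1 := congrArg (fun q : G.Walk x u => q.getVert 1) heq
  simpa [SimpleGraph.Walk.getVert_cons_succ, SimpleGraph.Walk.getVert_zero] using h1

lemma exists_child_subtree {G : SimpleGraph V} (hT : G.IsTree) {x u : V} (hu : u ≠ x) :
    ∃ c, G.Adj x c ∧ u ∈ SubtreeAvoiding G x c := by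
  classical
  have hreach : G.Reachable x u := hT.isConnected.preconnected x u
  obtain ⟨w⟩ := hreach
  have haux : ∀ (p : G.Walk x u), p.IsPath → ∃ c, G.Adj x c ∧ u ∈ SubtreeAvoiding G x c := by
    intro p
    cases p with
    | nil => intro _; exact absurd rfl hu
    | cons h q =>
      intro hp
      rw [SimpleGraph.Walk.cons_isPath_iff] at hp
      exact ⟨_, h, q, hp.2⟩
  exact haux w.bypass w.bypass_isPath

lemma part_card_le [Fintype V] {W : Set V} {k : ℕ} {P : Fin k → Set V}
    (h : IsPartitionOn W P) : k ≤ Fintype.card V := by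
  choose f hfm using h.1
  have hinj : Function.Injective f := by
    intro i i' he
    by_contra hne
    exact (h.2.1 hne).ne_of_mem (hfm i) (hfm i') he
  simpa using Fintype.card_le_of_injective f hinj

lemma bddAbove_transSet [Fintype V] (G : SimpleGraph V) (W : Set V) (c : V) :
    BddAbove {p | ∃ (k : ℕ) (P : Fin k → Set V), IsTransitivePartOn G W P ∧
      ∃ i : Fin k, (i : ℕ) + 1 = p ∧ c ∈ P i} := by
  refine ⟨Fintype.card V, ?_⟩
  rintro p ⟨k, P, hP, i, hi, -⟩
  have h1 := part_card_le hP.1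
  have h2 := i.isLt
  omega

lemma transSet_mem_one {G : SimpleGraph V} {W : Set V} {c : V} (hc : c ∈ W) :
    1 ∈ {p | ∃ (k : ℕ) (P : Fin k → Set V), IsTransitivePartOn G W P ∧
      ∃ i : Fin k, (i : ℕ) + 1 = p ∧ c ∈ P i} := by
  refine ⟨1, fun _ => W, ⟨⟨fun _ => ⟨c, hc⟩, ?_, Set.iUnion_const W⟩, ?_⟩, ⟨0, by simp, hc⟩⟩
  · intro a b hab; exact absurd (Subsingleton.elim a b) hab
  · intro a b h; exact absurd h (by rw [Subsingleton.elim a b]; exact lt_irrefl b)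

lemma one_le_transNumOn [Fintype V] {G : SimpleGraph V} {W : Set V} {c : V} (hc : c ∈ W) :
    1 ≤ transNumOn G W c :=
  le_csSup (bddAbove_transSet G W c) (transSet_mem_one hc)

end Helpers

section RealizeRestrict

variable {V : Type*}

open Set

lemma realize_transNumOn [Fintype V] {G : SimpleGraph V} {W : Set V} {c : V} (hc : c ∈ W)
    (p : ℕ) (hp1 : 1 ≤ p) (hp2 : p ≤ transNumOn G W c) :
    ∃ Q : Fin p → Set V, IsTransitivePartOn G W Q ∧ c ∈ Q ⟨p - 1, by omega⟩ := by
  have hmem := Nat.sSup_mem (s := {p | ∃ (k : ℕ) (P : Fin k → Set V),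
      IsTransitivePartOn G W P ∧ ∃ i : Fin k, (i : ℕ) + 1 = p ∧ c ∈ P i})
      ⟨1, transSet_mem_one hc⟩ (bddAbove_transSet G W c)
  obtain ⟨k', P', hP', i, hi, hci⟩ := hmem
  have hik : (i : ℕ) < k' := i.isLt
  have hpi : p ≤ (i : ℕ) + 1 := by rw [hi]; exact hp2
  have hpk : p ≤ k' := le_trans hpi hik
  clear hi hp2
  refine ⟨fun q => if h : (q : ℕ) + 1 < p then P' ⟨(q : ℕ), lt_of_lt_of_le q.isLt hpk⟩
      else W ∩ ⋃ m : Fin k', ⋃ (_ : p ≤ (m : ℕ) + 1), P' m, ⟨⟨?_, ?_, ?_⟩, ?_⟩, ?_⟩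
  · -- nonempty
    intro q
    dsimp only
    split_ifs with h
    · exact hP'.1.1 _
    · exact ⟨c, hc, Set.mem_iUnion.mpr ⟨i, Set.mem_iUnion.mpr ⟨hpi, hci⟩⟩⟩
  · -- pairwise disjoint
    intro q q' hne
    dsimp only
    rw [Set.disjoint_left]
    intro u hu hu'
    split_ifs at hu hu' with h1 h2 h3
    · have hne' : (⟨(q : ℕ), lt_of_lt_of_le q.isLt hpk⟩ : Fin k') ≠
          ⟨(q' : ℕ), lt_of_lt_of_le q'.isLt hpk⟩ :=
        fun he => hne (Fin.val_injective (Fin.mk_eq_mk.mp he))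
      exact Set.disjoint_left.mp (hP'.1.2.1 hne') hu hu'
    · obtain ⟨m, hm⟩ := Set.mem_iUnion.mp hu'.2
      obtain ⟨hpm, hum⟩ := Set.mem_iUnion.mp hm
      have hne' : (⟨(q : ℕ), lt_of_lt_of_le q.isLt hpk⟩ : Fin k') ≠ m := by
        intro he
        have h5 : (q : ℕ) = (m : ℕ) := congrArg Fin.val he
        omega
      exact Set.disjoint_left.mp (hP'.1.2.1 hne') hu hum
    · obtain ⟨m, hm⟩ := Set.mem_iUnion.mp hu.2
      obtain ⟨hpm, hum⟩ := Set.mem_iUnion.mp hm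
      have hne' : m ≠ (⟨(q' : ℕ), lt_of_lt_of_le q'.isLt hpk⟩ : Fin k') := by
        intro he
        have h5 : (m : ℕ) = (q' : ℕ) := congrArg Fin.val he
        omega
      exact Set.disjoint_left.mp (hP'.1.2.1 hne') hum hu'
    · have hq1 := q.isLt
      have hq2 := q'.isLt
      exact hne (Fin.val_injective (by omega))
  · -- union
    ext u
    simp only [Set.mem_iUnion]
    constructor
    · rintro ⟨q, hq⟩
      split_ifs at hq with h
      · rw [← hP'.1.2.2]
        exact Set.mem_iUnion.mpr ⟨_, hq⟩
      · exact hq.1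
    · intro hu
      have hu2 : u ∈ ⋃ m, P' m := by rw [hP'.1.2.2]; exact hu
      obtain ⟨m, hm⟩ := Set.mem_iUnion.mp hu2
      by_cases hmp : (m : ℕ) + 1 < p
      · refine ⟨⟨(m : ℕ), by omega⟩, ?_⟩
        rw [dif_pos (show ((⟨(m : ℕ), by omega⟩ : Fin p) : ℕ) + 1 < p from hmp)]
        exact hm
      · refine ⟨⟨p - 1, by omega⟩, ?_⟩
        rw [dif_neg (show ¬(((⟨p - 1, by omega⟩ : Fin p) : ℕ) + 1 < p) by
          simp only [Fin.val_mk]; omega)]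
        exact ⟨hu, Set.mem_iUnion.mpr ⟨m, Set.mem_iUnion.mpr ⟨by omega, hm⟩⟩⟩
  · -- dominance
    intro q q' hlt b hb
    have hqq' : (q : ℕ) < (q' : ℕ) := hlt
    have hq'p := q'.isLt
    have hq : (q : ℕ) + 1 < p := by omega
    dsimp only at hb ⊢
    rw [dif_pos hq]
    split_ifs at hb with h'
    · exact hP'.2 _ _ (show ((q : ℕ) : ℕ) < (q' : ℕ) from hqq') b hb
    · obtain ⟨m, hm⟩ := Set.mem_iUnion.mp hb.2
      obtain ⟨hpm, hbm⟩ := Set.mem_iUnion.mp hm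
      exact hP'.2 ⟨(q : ℕ), lt_of_lt_of_le q.isLt hpk⟩ m
        (show (q : ℕ) < (m : ℕ) by omega) b hbm
  · -- c in top
    dsimp only
    rw [dif_neg (show ¬(((⟨p - 1, by omega⟩ : Fin p) : ℕ) + 1 < p) by
      simp only [Fin.val_mk]; omega)]
    exact ⟨hc, Set.mem_iUnion.mpr ⟨i, Set.mem_iUnion.mpr ⟨hpi, hci⟩⟩⟩

lemma restrict_transNumOn [Fintype V] {G : SimpleGraph V} {x c : V} (hxc : G.Adj x c) {n : ℕ}
    {P : Fin n → Set V} (hP : IsTransitivePartOn G Set.univ P) {q : Fin n} (hcq : c ∈ P q)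
    (hx : ∀ i : Fin n, (i : ℕ) ≤ (q : ℕ) → x ∉ P i) :
    (q : ℕ) + 1 ≤ transNumOn G (SubtreeAvoiding G x c) c := by
  have hcW : c ∈ SubtreeAvoiding G x c := subtree_self hxc
  refine le_csSup (bddAbove_transSet G (SubtreeAvoiding G x c) c) ?_
  have hqn : (q : ℕ) < n := q.isLt
  refine ⟨(q : ℕ) + 1, fun i =>
      if h : (i : ℕ) < (q : ℕ) then P ⟨(i : ℕ), lt_trans h hqn⟩ ∩ SubtreeAvoiding G x c
      else SubtreeAvoiding G x c ∩ ⋃ m : Fin n, ⋃ (_ : (q : ℕ) ≤ (m : ℕ)), P m,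
      ⟨⟨?_, ?_, ?_⟩, ?_⟩, ⟨(q : ℕ), by omega⟩, by simp, ?_⟩
  · -- nonempty
    intro i
    dsimp only
    split_ifs with h
    · obtain ⟨a, haP, hac⟩ := hP.2 ⟨(i : ℕ), lt_trans h hqn⟩ q
        (show ((i : ℕ) : ℕ) < (q : ℕ) from h) c hcq
      have hax : a ≠ x := fun he =>
        hx ⟨(i : ℕ), lt_trans h hqn⟩ (show (i : ℕ) ≤ (q : ℕ) by omega) (he ▸ haP)
      exact ⟨a, haP, subtree_adj hcW hac.symm hax⟩
    · exact ⟨c, hcW, Set.mem_iUnion.mpr ⟨q, Set.mem_iUnion.mpr ⟨le_refl _, hcq⟩⟩⟩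
  · -- disjoint
    intro i i' hne
    dsimp only
    rw [Set.disjoint_left]
    intro u hu hu'
    split_ifs at hu hu' with h1 h2 h3
    · have hne' : (⟨(i : ℕ), lt_trans h1 hqn⟩ : Fin n) ≠ ⟨(i' : ℕ), lt_trans h2 hqn⟩ :=
        fun he => hne (Fin.val_injective (Fin.mk_eq_mk.mp he))
      exact Set.disjoint_left.mp (hP.1.2.1 hne') hu.1 hu'.1
    · obtain ⟨m, hm⟩ := Set.mem_iUnion.mp hu'.2
      obtain ⟨hqm, hum⟩ := Set.mem_iUnion.mp hm
      have hne' : (⟨(i : ℕ), lt_trans h1 hqn⟩ : Fin n) ≠ m := by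
        intro he
        have h5 : (i : ℕ) = (m : ℕ) := congrArg Fin.val he
        omega
      exact Set.disjoint_left.mp (hP.1.2.1 hne') hu.1 hum
    · obtain ⟨m, hm⟩ := Set.mem_iUnion.mp hu.2
      obtain ⟨hqm, hum⟩ := Set.mem_iUnion.mp hm
      have hne' : m ≠ (⟨(i' : ℕ), lt_trans h3 hqn⟩ : Fin n) := by
        intro he
        have h5 : (m : ℕ) = (i' : ℕ) := congrArg Fin.val he
        omega
      exact Set.disjoint_left.mp (hP.1.2.1 hne') hum hu'.1
    · have hi1 := i.isLt
      have hi2 := i'.isLt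
      exact hne (Fin.val_injective (by omega))
  · -- union
    ext u
    simp only [Set.mem_iUnion]
    constructor
    · rintro ⟨i, hi⟩
      split_ifs at hi with h
      · exact hi.2
      · exact hi.1
    · intro hu
      have hu2 : u ∈ ⋃ m, P m := by rw [hP.1.2.2]; exact Set.mem_univ u
      obtain ⟨m, hm⟩ := Set.mem_iUnion.mp hu2
      by_cases hmq : (m : ℕ) < (q : ℕ)
      · refine ⟨⟨(m : ℕ), by omega⟩, ?_⟩
        rw [dif_pos (show ((⟨(m : ℕ), by omega⟩ : Fin ((q : ℕ) + 1)) : ℕ) < (q : ℕ) from hmq)]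
        exact ⟨hm, hu⟩
      · refine ⟨⟨(q : ℕ), by omega⟩, ?_⟩
        rw [dif_neg (show ¬(((⟨(q : ℕ), by omega⟩ : Fin ((q : ℕ) + 1)) : ℕ) < (q : ℕ)) by
          simp only [Fin.val_mk]; omega)]
        exact ⟨hu, Set.mem_iUnion.mpr ⟨m, Set.mem_iUnion.mpr ⟨by omega, hm⟩⟩⟩
  · -- dominance
    intro i i' hlt b hb
    have hii' : (i : ℕ) < (i' : ℕ) := hlt
    have hi'q : (i' : ℕ) < (q : ℕ) + 1 := i'.isLt
    have hiq : (i : ℕ) < (q : ℕ) := by omega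
    dsimp only at hb ⊢
    rw [dif_pos hiq]
    split_ifs at hb with h'
    · obtain ⟨a, haP, hab⟩ := hP.2 ⟨(i : ℕ), lt_trans hiq hqn⟩ ⟨(i' : ℕ), lt_trans h' hqn⟩
        (show ((i : ℕ) : ℕ) < (i' : ℕ) from hii') b hb.1
      have hax : a ≠ x := fun he =>
        hx ⟨(i : ℕ), lt_trans hiq hqn⟩ (show (i : ℕ) ≤ (q : ℕ) by omega) (he ▸ haP)
      exact ⟨a, ⟨haP, subtree_adj hb.2 hab.symm hax⟩, hab⟩
    · obtain ⟨m, hm⟩ := Set.mem_iUnion.mp hb.2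
      obtain ⟨hqm, hbm⟩ := Set.mem_iUnion.mp hm
      obtain ⟨a, haP, hab⟩ := hP.2 ⟨(i : ℕ), lt_trans hiq hqn⟩ m
        (show (i : ℕ) < (m : ℕ) by omega) b hbm
      have hax : a ≠ x := fun he =>
        hx ⟨(i : ℕ), lt_trans hiq hqn⟩ (show (i : ℕ) ≤ (q : ℕ) by omega) (he ▸ haP)
      exact ⟨a, ⟨haP, subtree_adj hb.1 hab.symm hax⟩, hab⟩
  · -- c in top
    dsimp only
    rw [dif_neg (show ¬(((⟨(q : ℕ), by omega⟩ : Fin ((q : ℕ) + 1)) : ℕ) < (q : ℕ)) by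
      simp only [Fin.val_mk]; omega)]
    exact ⟨hcW, Set.mem_iUnion.mpr ⟨q, Set.mem_iUnion.mpr ⟨le_refl _, hcq⟩⟩⟩

end RealizeRestrict

section Glue

variable {V : Type*}

open Set

lemma glue_partition [Fintype V] {G : SimpleGraph V} (hT : G.IsTree) {x : V} {k : ℕ}
    {v : Fin k → V} (hinj : Function.Injective v) (hrange : Set.range v = G.neighborSet x)
    {z : ℕ} (hz : 1 ≤ z) (pos : Fin k → ℕ) (hp1 : ∀ m, 1 ≤ pos m) (hp2 : ∀ m, pos m ≤ z)
    (hp3 : ∀ m, pos m ≤ transNumOn G (SubtreeAvoiding G x (v m)) (v m))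
    (hsurj : ∀ q : ℕ, 1 ≤ q → q ≤ z → ∃ m, pos m = q) :
    ∃ P : Fin (1 + z) → Set V, IsTransitivePartOn G Set.univ P ∧ x ∈ P ⟨z, by omega⟩ ∧
      ∀ m : Fin k, v m ∈ P ⟨pos m - 1, by have := hp2 m; omega⟩ := by
  classical
  have hadj : ∀ m, G.Adj x (v m) := fun m => by
    have h := Set.mem_range_self (f := v) m
    rw [hrange] at h
    exact h
  have hQex := fun m => realize_transNumOn (subtree_self (hadj m)) (pos m) (hp1 m) (hp3 m)
  choose Q hQ1 hQ2 using hQex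
  have hQW : ∀ m (i : Fin (pos m)), Q m i ⊆ SubtreeAvoiding G x (v m) := by
    intro m i
    rw [← (hQ1 m).1.2.2]
    exact Set.subset_iUnion _ i
  refine ⟨fun q => if h : (q : ℕ) = z then {x}
      else ⋃ m : Fin k, ⋃ (h2 : (q : ℕ) < pos m), Q m ⟨(q : ℕ), h2⟩,
      ⟨⟨?_, ?_, ?_⟩, ?_⟩, ?_, ?_⟩
  · -- nonempty
    intro q
    dsimp only
    split_ifs with h
    · exact ⟨x, rfl⟩
    · have hq := q.isLt
      obtain ⟨m, hm⟩ := hsurj ((q : ℕ) + 1) (by omega) (by omega)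
      have hlt : (q : ℕ) < pos m := by omega
      refine ⟨v m, Set.mem_iUnion.mpr ⟨m, Set.mem_iUnion.mpr ⟨hlt, ?_⟩⟩⟩
      have hmem := hQ2 m
      convert hmem using 2
      exact Fin.mk_eq_mk.mpr (by omega)
  · -- disjoint
    intro q q' hne
    dsimp only
    rw [Set.disjoint_left]
    intro u hu hu'
    split_ifs at hu hu' with h1 h2 h3
    · exact hne (Fin.val_injective (h1.trans h2.symm))
    · obtain ⟨m, hm⟩ := Set.mem_iUnion.mp hu'
      obtain ⟨hlt, hum⟩ := Set.mem_iUnion.mp hm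
      rw [Set.mem_singleton_iff] at hu
      exact subtree_not_mem_x (hu ▸ hQW m _ hum)
    · obtain ⟨m, hm⟩ := Set.mem_iUnion.mp hu
      obtain ⟨hlt, hum⟩ := Set.mem_iUnion.mp hm
      rw [Set.mem_singleton_iff] at hu'
      exact subtree_not_mem_x (hu' ▸ hQW m _ hum)
    · obtain ⟨m, hm⟩ := Set.mem_iUnion.mp hu
      obtain ⟨hlt, hum⟩ := Set.mem_iUnion.mp hm
      obtain ⟨m', hm'⟩ := Set.mem_iUnion.mp hu'
      obtain ⟨hlt', hum'⟩ := Set.mem_iUnion.mp hm'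
      have hmm : m = m' := by
        apply hinj
        exact subtree_eq_child hT (hadj m) (hadj m') (hQW m _ hum) (hQW m' _ hum')
      subst hmm
      have hne' : (⟨(q : ℕ), hlt⟩ : Fin (pos m)) ≠ ⟨(q' : ℕ), hlt'⟩ := by
        intro he
        exact hne (Fin.val_injective (Fin.mk_eq_mk.mp he))
      exact Set.disjoint_left.mp ((hQ1 m).1.2.1 hne') hum hum'
  · -- union = univ
    ext u
    simp only [Set.mem_iUnion, Set.mem_univ, iff_true]
    by_cases hux : u = x
    · refine ⟨⟨z, by omega⟩, ?_⟩
      rw [dif_pos (show ((⟨z, by omega⟩ : Fin (1 + z)) : ℕ) = z from rfl)]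
      exact Set.mem_singleton_iff.mpr hux
    · obtain ⟨c, hc, hcu⟩ := exists_child_subtree hT hux
      have hcr : c ∈ Set.range v := by rw [hrange]; exact hc
      obtain ⟨m, hm⟩ := hcr
      subst hm
      rw [← (hQ1 m).1.2.2] at hcu
      obtain ⟨i, hi⟩ := Set.mem_iUnion.mp hcu
      have hiz : (i : ℕ) < z := lt_of_lt_of_le i.isLt (hp2 m)
      refine ⟨⟨(i : ℕ), by omega⟩, ?_⟩
      rw [dif_neg (show ¬(((⟨(i : ℕ), by omega⟩ : Fin (1 + z)) : ℕ) = z) by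
        simp only [Fin.val_mk]; omega)]
      exact Set.mem_iUnion.mpr ⟨m, Set.mem_iUnion.mpr ⟨i.isLt, hi⟩⟩
  · -- dominance
    intro q q' hlt b hb
    have hqq' : (q : ℕ) < (q' : ℕ) := hlt
    have hq'z : (q' : ℕ) < 1 + z := q'.isLt
    have hqz : (q : ℕ) < z := by
      rcases Nat.lt_or_ge (q' : ℕ) z with h | h
      · omega
      · omega
    dsimp only at hb ⊢
    rw [dif_neg (show ¬((q : ℕ) = z) by omega)]
    split_ifs at hb with h'
    · rw [Set.mem_singleton_iff] at hb
      subst hb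
      obtain ⟨m, hm⟩ := hsurj ((q : ℕ) + 1) (by omega) (by omega)
      have hlt2 : (q : ℕ) < pos m := by omega
      refine ⟨v m, Set.mem_iUnion.mpr ⟨m, Set.mem_iUnion.mpr ⟨hlt2, ?_⟩⟩, (hadj m).symm⟩
      have hmem := hQ2 m
      convert hmem using 2
      exact Fin.mk_eq_mk.mpr (by omega)
    · obtain ⟨m, hm⟩ := Set.mem_iUnion.mp hb
      obtain ⟨h2, hbm⟩ := Set.mem_iUnion.mp hm
      have hq2 : (q : ℕ) < pos m := by omega
      obtain ⟨a, haQ, hab⟩ := (hQ1 m).2 ⟨(q : ℕ), hq2⟩ ⟨(q' : ℕ), h2⟩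
        (show ((q : ℕ) : ℕ) < (q' : ℕ) from hqq') b hbm
      exact ⟨a, Set.mem_iUnion.mpr ⟨m, Set.mem_iUnion.mpr ⟨hq2, haQ⟩⟩, hab⟩
  · -- x in top
    dsimp only
    rw [dif_pos (show ((⟨z, by omega⟩ : Fin (1 + z)) : ℕ) = z from rfl)]
    rfl
  · -- children positions
    intro m
    have h1 := hp1 m
    have h2 := hp2 m
    dsimp only
    rw [dif_neg (show ¬(((⟨pos m - 1, by omega⟩ : Fin (1 + z)) : ℕ) = z) by
      simp only [Fin.val_mk]; omega)]
    exact Set.mem_iUnion.mpr ⟨m, Set.mem_iUnion.mpr ⟨by omega, hQ2 m⟩⟩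

end Glue

section ChildPos

noncomputable def childPos {k z : ℕ} (idx : Fin z → Fin k) (jn s : ℕ) : Fin k → ℕ :=
  fun m => if h : ∃ t, idx t = m then
      (if (h.choose : ℕ) = jn then s
       else if (h.choose : ℕ) + 1 < s then (h.choose : ℕ) + 1
       else if (h.choose : ℕ) + 1 ≤ jn then (h.choose : ℕ) + 2
       else (h.choose : ℕ) + 1)
    else 1

lemma childPos_idx {k z : ℕ} {idx : Fin z → Fin k} (hidxinj : Function.Injective idx)
    (jn s : ℕ) (t : Fin z) :
    childPos idx jn s (idx t) =
      if (t : ℕ) = jn then s else if (t : ℕ) + 1 < s then (t : ℕ) + 1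
      else if (t : ℕ) + 1 ≤ jn then (t : ℕ) + 2 else (t : ℕ) + 1 := by
  unfold childPos
  have hex : ∃ t', idx t' = idx t := ⟨t, rfl⟩
  rw [dif_pos hex]
  rw [hidxinj hex.choose_spec]

lemma childPos_not_idx {k z : ℕ} {idx : Fin z → Fin k} {m : Fin k}
    (h : ∀ t, idx t ≠ m) (jn s : ℕ) : childPos idx jn s m = 1 := by
  unfold childPos
  rw [dif_neg (fun ⟨t, ht⟩ => h t ht)]

end ChildPos


/-- With the setup of Lemma 3.2, fix `1 ≤ j ≤ z`, and suppose no child of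
`x` other than `v_{i₁}, …, v_{i_z}` has rooted transitive number at least `j`.  Then a
transitive partition `{V_1, …, V_{1+z}}` of `T` with `x ∈ V_{1+z}` and `v_{i_j} ∈ V_s`
for some `1 ≤ s ≤ j - 1` exists iff there is an `r` with `1 ≤ r ≤ j - 1` and
`l_{i_t} ≥ t + 1` for all `r ≤ t ≤ j - 1`; moreover, for the minimum such `r`, such a
partition exists for every `s` with `r ≤ s ≤ j - 1`.  (Here `j : Fin z` denotes the
`1`-indexed position `(j : ℕ) + 1`, and `t : Fin z` the position `(t : ℕ) + 1`.) -/
theorem tree_transPartition_child_low_position_iff [Fintype V] (G : SimpleGraph V)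
    (hT : G.IsTree) (x : V) (k : ℕ) (v : Fin k → V) (hinj : Function.Injective v)
    (hrange : Set.range v = G.neighborSet x)
    (l : Fin k → ℕ)
    (hl : ∀ i, l i = transNumOn G (SubtreeAvoiding G x (v i)) (v i))
    (hmono : Monotone l)
    (z : ℕ) (idx : Fin z → Fin k) (hidx : StrictMono idx)
    (hidxl : ∀ t : Fin z, (t : ℕ) + 1 ≤ l (idx t))
    (hzmax : ∀ m : ℕ,
      (∃ f : Fin m → Fin k, StrictMono f ∧ ∀ t : Fin m, (t : ℕ) + 1 ≤ l (f t)) → m ≤ z)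
    (j : Fin z)
    (hother : ∀ m : Fin k, (∀ t : Fin z, m ≠ idx t) → l m < (j : ℕ) + 1) :
    ((∃ s : ℕ, ∃ _ : 1 ≤ s, ∃ _ : s ≤ (j : ℕ),
        ∃ P : Fin (1 + z) → Set V, IsTransitivePartOn G Set.univ P ∧
          x ∈ P ⟨z, by omega⟩ ∧ v (idx j) ∈ P ⟨s - 1, by have := j.isLt; omega⟩) ↔
      (∃ r : ℕ, 1 ≤ r ∧ r ≤ (j : ℕ) ∧
        ∀ t : Fin z, r ≤ (t : ℕ) + 1 → (t : ℕ) + 1 ≤ (j : ℕ) → (t : ℕ) + 2 ≤ l (idx t))) ∧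
    (∀ r : ℕ,
      (1 ≤ r ∧ r ≤ (j : ℕ) ∧
        ∀ t : Fin z, r ≤ (t : ℕ) + 1 → (t : ℕ) + 1 ≤ (j : ℕ) → (t : ℕ) + 2 ≤ l (idx t)) →
      (∀ r' : ℕ,
        (1 ≤ r' ∧ r' ≤ (j : ℕ) ∧
          ∀ t : Fin z, r' ≤ (t : ℕ) + 1 → (t : ℕ) + 1 ≤ (j : ℕ) → (t : ℕ) + 2 ≤ l (idx t)) →
        r ≤ r') →
      ∀ s : ℕ, ∀ _hs1 : r ≤ s, ∀ _hs2 : s ≤ (j : ℕ),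
        ∃ P : Fin (1 + z) → Set V, IsTransitivePartOn G Set.univ P ∧
          x ∈ P ⟨z, by omega⟩ ∧ v (idx j) ∈ P ⟨s - 1, by have := j.isLt; omega⟩) := by
  classical
  have hjz : (j : ℕ) < z := j.isLt
  have hadj : ∀ m, G.Adj x (v m) := fun m => by
    have h := Set.mem_range_self (f := v) m
    rw [hrange] at h
    exact h
  -- Construction half --------------------------------------------------------
  have construct : ∀ (s : ℕ) (_hs1 : 1 ≤ s) (hs2 : s ≤ (j : ℕ))
      (_hcond : ∀ t : Fin z, s ≤ (t : ℕ) + 1 → (t : ℕ) + 1 ≤ (j : ℕ) → (t : ℕ) + 2 ≤ l (idx t)),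
      ∃ P : Fin (1 + z) → Set V, IsTransitivePartOn G Set.univ P ∧
        x ∈ P ⟨z, by omega⟩ ∧ v (idx j) ∈ P ⟨s - 1, by omega⟩ := by
    intro s hs1 hs2 hcond
    set pos : Fin k → ℕ := childPos idx (j : ℕ) s with hposdef
    have hposidx : ∀ t : Fin z, pos (idx t) =
        if (t : ℕ) = (j : ℕ) then s else if (t : ℕ) + 1 < s then (t : ℕ) + 1
        else if (t : ℕ) + 1 ≤ (j : ℕ) then (t : ℕ) + 2 else (t : ℕ) + 1 :=
      fun t => childPos_idx hidx.injective (j : ℕ) s t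
    have hpos1 : ∀ m, 1 ≤ pos m := by
      intro m
      by_cases h : ∃ t, idx t = m
      · obtain ⟨t, ht⟩ := h
        rw [← ht, hposidx t]
        split_ifs <;> omega
      · push_neg at h
        rw [hposdef, childPos_not_idx (fun t ht => h t ht) (j : ℕ) s]
    have hposz : ∀ m, pos m ≤ z := by
      intro m
      by_cases h : ∃ t, idx t = m
      · obtain ⟨t, ht⟩ := h
        have htz := t.isLt
        rw [← ht, hposidx t]
        split_ifs <;> omega
      · push_neg at h
        rw [hposdef, childPos_not_idx (fun t ht => h t ht) (j : ℕ) s]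
        omega
    have hposl : ∀ m, pos m ≤ transNumOn G (SubtreeAvoiding G x (v m)) (v m) := by
      intro m
      rw [← hl m]
      by_cases h : ∃ t, idx t = m
      · obtain ⟨t, ht⟩ := h
        have hlt := hidxl t
        rw [← ht, hposidx t]
        split_ifs with h1 h2 h3
        · omega
        · omega
        · exact hcond t (by omega) h3
        · omega
      · push_neg at h
        rw [hposdef, childPos_not_idx (fun t ht => h t ht) (j : ℕ) s, hl m]
        exact one_le_transNumOn (subtree_self (hadj m))
    have hsurj : ∀ q : ℕ, 1 ≤ q → q ≤ z → ∃ m, pos m = q := by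
      intro q hq1 hqz
      by_cases hc1 : q < s
      · refine ⟨idx ⟨q - 1, by omega⟩, ?_⟩
        rw [hposidx]
        simp only [Fin.val_mk]
        split_ifs <;> omega
      · by_cases hc2 : q = s
        · refine ⟨idx j, ?_⟩
          rw [hposidx]
          split_ifs <;> omega
        · by_cases hc3 : q ≤ (j : ℕ) + 1
          · refine ⟨idx ⟨q - 2, by omega⟩, ?_⟩
            rw [hposidx]
            simp only [Fin.val_mk]
            split_ifs <;> omega
          · refine ⟨idx ⟨q - 1, by omega⟩, ?_⟩
            rw [hposidx]
            simp only [Fin.val_mk]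
            split_ifs <;> omega
    obtain ⟨P, hP, hxP, hall⟩ := glue_partition hT hinj hrange
      (show 1 ≤ z by omega) pos hpos1 hposz hposl hsurj
    refine ⟨P, hP, hxP, ?_⟩
    have hvj := hall (idx j)
    have hfj : pos (idx j) = s := by
      rw [hposidx]
      split_ifs <;> omega
    convert hvj using 2
    exact Fin.mk_eq_mk.mpr (by omega)
  -- Necessity half -----------------------------------------------------------
  have necessity : ∀ (s : ℕ) (_hs1 : 1 ≤ s) (hs2 : s ≤ (j : ℕ)) (P : Fin (1 + z) → Set V),
      IsTransitivePartOn G Set.univ P → x ∈ P ⟨z, by omega⟩ →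
      v (idx j) ∈ P ⟨s - 1, by omega⟩ →
      ∃ r : ℕ, 1 ≤ r ∧ r ≤ (j : ℕ) ∧
        ∀ t : Fin z, r ≤ (t : ℕ) + 1 → (t : ℕ) + 1 ≤ (j : ℕ) → (t : ℕ) + 2 ≤ l (idx t) := by
    intro s hs1 hs2 P hP hxP hvP
    have claim : ∃ t' : Fin z, (t' : ℕ) < (j : ℕ) ∧ (j : ℕ) + 1 ≤ l (idx t') := by
      have hchoice : ∀ q : Fin z, ∃ t : Fin z, (j : ℕ) ≤ (q : ℕ) →
          v (idx t) ∈ P ⟨(q : ℕ), by have := q.isLt; omega⟩ ∧ (q : ℕ) + 1 ≤ l (idx t) := by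
        intro q
        by_cases hq : (j : ℕ) ≤ (q : ℕ)
        · have hqz := q.isLt
          obtain ⟨a, haP, hax⟩ := hP.2 ⟨(q : ℕ), by omega⟩ ⟨z, by omega⟩
            (show ((q : ℕ) : ℕ) < z from q.isLt) x hxP
          have har : a ∈ Set.range v := by rw [hrange]; exact hax.symm
          obtain ⟨m, hm⟩ := har
          subst hm
          have hxnot : ∀ i : Fin (1 + z), (i : ℕ) ≤ (q : ℕ) → x ∉ P i := by
            intro i hi hxi
            have hiz : i ≠ ⟨z, by omega⟩ := by
              intro he
              have := congrArg Fin.val he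
              simp only [Fin.val_mk] at this
              omega
            exact Set.disjoint_left.mp (hP.1.2.1 hiz) hxi hxP
          have hln : (q : ℕ) + 1 ≤ l m := by
            rw [hl m]
            exact restrict_transNumOn hax.symm hP haP hxnot
          have hm2 : ¬ (∀ t : Fin z, m ≠ idx t) := by
            intro hno
            have := hother m hno
            omega
          push_neg at hm2
          obtain ⟨t, ht⟩ := hm2
          exact ⟨t, fun _ => ⟨by rw [← ht]; exact haP, by rw [← ht]; exact hln⟩⟩
        · exact ⟨j, fun h => absurd h hq⟩
      choose g hg using hchoice
      by_contra hcon
      push_neg at hcon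
      set A : Finset (Fin z) := Finset.univ.filter (fun q : Fin z => (j : ℕ) ≤ (q : ℕ)) with hA
      set B : Finset (Fin z) := Finset.univ.filter (fun t : Fin z => (j : ℕ) + 1 ≤ (t : ℕ)) with hB
      have hmaps : ∀ q ∈ A, g q ∈ B := by
        intro q hq
        rw [hA, Finset.mem_filter] at hq
        have hgq := hg q hq.2
        rw [hB, Finset.mem_filter]
        refine ⟨Finset.mem_univ _, ?_⟩
        by_contra hlt
        push_neg at hlt
        by_cases hgj : (g q : ℕ) < (j : ℕ)
        · have h1 := hcon (g q) hgj
          have h2 := hgq.2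
          omega
        · have hgqj : g q = j := Fin.val_injective (by omega)
          rw [hgqj] at hgq
          have hne : (⟨s - 1, by omega⟩ : Fin (1 + z)) ≠ ⟨(q : ℕ), by have := q.isLt; omega⟩ := by
            intro he
            have := congrArg Fin.val he
            simp only [Fin.val_mk] at this
            omega
          exact Set.disjoint_left.mp (hP.1.2.1 hne) hvP hgq.1
      have hinjA : Set.InjOn g A := by
        intro q1 hq1 q2 hq2 he
        rw [Finset.mem_coe, hA, Finset.mem_filter] at hq1 hq2
        by_contra hne
        have h1 := (hg q1 hq1.2).1
        have h2 := (hg q2 hq2.2).1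
        rw [he] at h1
        have hnep : (⟨(q1 : ℕ), by have := q1.isLt; omega⟩ : Fin (1 + z)) ≠
            ⟨(q2 : ℕ), by have := q2.isLt; omega⟩ := by
          intro hee
          exact hne (Fin.val_injective (Fin.mk_eq_mk.mp hee))
        exact Set.disjoint_left.mp (hP.1.2.1 hnep) h1 h2
      have hcard := Finset.card_le_card_of_injOn g hmaps hinjA
      have hBA : B ⊆ A := by
        intro t ht
        rw [hB, Finset.mem_filter] at ht
        rw [hA, Finset.mem_filter]
        exact ⟨Finset.mem_univ _, by omega⟩
      have hjA : j ∈ A := by rw [hA, Finset.mem_filter]; exact ⟨Finset.mem_univ _, le_refl _⟩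
      have hjB : j ∉ B := by
        rw [hB, Finset.mem_filter]
        push_neg
        intro _
        omega
      have hss : B ⊂ A := ⟨hBA, fun hAB => hjB (hAB hjA)⟩
      have hcard2 := Finset.card_lt_card hss
      omega
    obtain ⟨t', ht1, ht2⟩ := claim
    refine ⟨(t' : ℕ) + 1, by omega, by omega, ?_⟩
    intro t hrt htj
    have hmt : l (idx t') ≤ l (idx t) :=
      hmono (hidx.monotone (Fin.le_def.mpr (by omega)))
    omega
  -- Assemble -----------------------------------------------------------------
  constructor
  · constructor
    · rintro ⟨s, hs1, hs2, P, hP, hxP, hvP⟩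
      exact necessity s hs1 hs2 P hP hxP hvP
    · rintro ⟨r, hr1, hr2, hr3⟩
      exact ⟨r, hr1, hr2, construct r hr1 hr2 hr3⟩
  · intro r hr _hmin s hs1 hs2
    obtain ⟨hr1, hr2, hr3⟩ := hr
    exact construct s (by omega) hs2 (fun t h1 h2 => hr3 t (by omega) h2)
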